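/- arXiv:1011.0721 — 3 statements merged into one kernel-verified Lean document; each statement's English description precedes it below -/
import Mathlib

section
/- Let P, C : ℝ → M_n(ℂ) be differentiable families of matrices such that for every u: P(u)·P(u) = P(u) and P(u)·C(u) = C(u)·P(u) = 0. Then for every u and every ε ∈ ℝ: trace(P′(u)·exp(−ε²·C(u)²)) = 0, where exp is the matrix exponential. -/
/-!
Differentiating `P² = P` gives `P' = P'P + PP'`, and multiplying this by `P` on both sides
gives `PP'P = 0`. The matrix `E = exp(-ε²C²)` satisfies `PE = EP = P` because `PC = CP = 0`
kills every higher term of the exponential series. Hence, by cyclicity of the trace,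
`tr(P'E) = tr(P'PE) + tr(PP'E) = tr(P'P) + tr(P'EP) = 2 tr(P'P) = 2 tr(PP'P) = 0`.
-/

open NormedSpace Topology

theorem IsIdempotentElem.mul_mul_eq_zero_of_eq_mul_add_mul {R : Type*} [NonUnitalRing R]
    {p d : R} (hp : IsIdempotentElem p) (hd : d = d * p + p * d) : p * d * p = 0 := by
  have h : p * d = p * d * p + p * d := by
    conv_lhs => rw [hd]
    rw [mul_add, ← mul_assoc, ← mul_assoc, hp.eq]
  exact right_eq_add.mp h

theorem Matrix.trace_mul_eq_zero_of_eq_mul_add_mul {m R : Type*} [Fintype m] [CommRing R]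
    {p d x : Matrix m m R} (hp : IsIdempotentElem p) (hd : d = d * p + p * d)
    (hpx : p * x = p) (hxp : x * p = p) : (d * x).trace = 0 := by
  have hdp : (d * p).trace = 0 := by
    rw [← hp.eq, ← mul_assoc, trace_mul_comm, ← mul_assoc,
      hp.mul_mul_eq_zero_of_eq_mul_add_mul hd, trace_zero]
  calc (d * x).trace = (d * p * x).trace + (p * d * x).trace := by
        rw [← trace_add, ← add_mul, ← hd]
    _ = (d * p).trace + (d * x * p).trace := by
        rw [mul_assoc d p x, hpx, mul_assoc p d x, trace_mul_comm p]
    _ = 0 := by rw [mul_assoc, hxp, hdp, add_zero]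

section BanachAlgebra

variable {𝔸 : Type*} [NormedRing 𝔸] [NormedAlgebra ℚ 𝔸] [CompleteSpace 𝔸] {a b : 𝔸}

theorem NormedSpace.exp_mul_of_mul_eq_zero (h : a * b = 0) : exp a * b = b := by
  have hsingle := hasSum_single (f := fun n => ((n.factorial⁻¹ : ℚ) • a ^ n) * b) 0 fun k hk => by
    obtain ⟨k, rfl⟩ := Nat.exists_eq_succ_of_ne_zero hk
    rw [smul_mul_assoc, pow_succ, mul_assoc, h, mul_zero, smul_zero]
  simpa using ((exp_series_hasSum_exp' (𝕂 := ℚ) a).mul_right b).unique hsingle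

theorem NormedSpace.mul_exp_of_mul_eq_zero (h : b * a = 0) : b * exp a = b := by
  have hsingle := hasSum_single (f := fun n => b * ((n.factorial⁻¹ : ℚ) • a ^ n)) 0 fun k hk => by
    obtain ⟨k, rfl⟩ := Nat.exists_eq_succ_of_ne_zero hk
    rw [mul_smul_comm, pow_succ', ← mul_assoc, h, zero_mul, smul_zero]
  simpa using ((exp_series_hasSum_exp' (𝕂 := ℚ) a).mul_left b).unique hsingle

end BanachAlgebra

namespace Matrix

section Exponential

variable {m 𝔸 : Type*} [Fintype m] [DecidableEq m] [NormedRing 𝔸] [NormedAlgebra ℚ 𝔸]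
  [CompleteSpace 𝔸] {A B : Matrix m m 𝔸}

-- Under the operator norm, instance search does not find the completeness instance by
-- unification, so it is passed explicitly.
theorem exp_mul_of_mul_eq_zero (h : A * B = 0) : exp A * B = B := by
  open scoped Norms.Operator in
  have hcomplete : CompleteSpace (Matrix m m 𝔸) := inferInstance
  exact @NormedSpace.exp_mul_of_mul_eq_zero _ _ _ hcomplete _ _ h

theorem mul_exp_of_mul_eq_zero (h : B * A = 0) : B * exp A = B := by
  open scoped Norms.Operator in
  have hcomplete : CompleteSpace (Matrix m m 𝔸) := inferInstance
  exact @NormedSpace.mul_exp_of_mul_eq_zero _ _ _ hcomplete _ _ h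

end Exponential

section EntrywiseDerivative

variable {𝕜 𝔸 l m n : Type*} [NontriviallyNormedField 𝕜] [NormedRing 𝔸] [NormedAlgebra 𝕜 𝔸]
  [Fintype m] {x : 𝕜}

theorem hasDerivAt_mul_apply {A : 𝕜 → Matrix l m 𝔸} {B : 𝕜 → Matrix m n 𝔸}
    {A' : Matrix l m 𝔸} {B' : Matrix m n 𝔸}
    (hA : ∀ i j, HasDerivAt (fun y => A y i j) (A' i j) x)
    (hB : ∀ i j, HasDerivAt (fun y => B y i j) (B' i j) x) (i : l) (j : n) :
    HasDerivAt (fun y => (A y * B y) i j) ((A' * B x + A x * B') i j) x := by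
  simp only [mul_apply, add_apply, ← Finset.sum_add_distrib]
  exact HasDerivAt.fun_sum fun k _ => (hA i k).mul (hB k j)

theorem eq_mul_add_mul_of_hasDerivAt_of_isIdempotentElem {P : 𝕜 → Matrix m m 𝔸}
    {P' : Matrix m m 𝔸} (hP : ∀ i j, HasDerivAt (fun y => P y i j) (P' i j) x)
    (hidem : ∀ᶠ y in 𝓝 x, IsIdempotentElem (P y)) : P' = P' * P x + P x * P' := by
  ext i j
  refine (hP i j).unique ((hasDerivAt_mul_apply hP hP i j).congr_of_eventuallyEq ?_)
  filter_upwards [hidem] with y hy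
  rw [hy.eq]

end EntrywiseDerivative

end Matrix

theorem trace_proj_deriv_exp_eq_zero_general {n : ℕ}
    (P P' C : ℝ → Matrix (Fin n) (Fin n) ℂ)
    (hPderiv : ∀ u i j, HasDerivAt (fun v => P v i j) (P' u i j) u)
    (hidem : ∀ u, P u * P u = P u)
    (hPC : ∀ u, P u * C u = 0) (hCP : ∀ u, C u * P u = 0) (u : ℝ) (ε : ℝ) :
    (P' u * exp ((-(ε : ℂ) ^ 2) • (C u * C u))).trace = 0 := by
  have hleibniz : P' u = P' u * P u + P u * P' u :=
    Matrix.eq_mul_add_mul_of_hasDerivAt_of_isIdempotentElem (hPderiv u) (.of_forall hidem)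
  have hPA : P u * ((-(ε : ℂ) ^ 2) • (C u * C u)) = 0 := by
    rw [mul_smul_comm, ← mul_assoc, hPC, zero_mul, smul_zero]
  have hAP : (-(ε : ℂ) ^ 2) • (C u * C u) * P u = 0 := by
    rw [smul_mul_assoc, mul_assoc, hCP, mul_zero, smul_zero]
  exact Matrix.trace_mul_eq_zero_of_eq_mul_add_mul (hidem u) hleibniz
    (Matrix.mul_exp_of_mul_eq_zero hPA) (Matrix.exp_mul_of_mul_eq_zero hAP)

/-- If `P, C : ℝ → M_n(ℂ)` are differentiable families of matrices with
`P(u)² = P(u)` and `P(u)·C(u) = C(u)·P(u) = 0` for all `u`, then for every `u` and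
every `ε ∈ ℝ`, `trace(P′(u)·exp(−ε²·C(u)²)) = 0`, where `exp` is the matrix
exponential and `P′` is the entrywise derivative. -/
theorem trace_proj_deriv_exp_eq_zero {n : ℕ}
    (P P' C C' : ℝ → Matrix (Fin n) (Fin n) ℂ)
    (hPderiv : ∀ u i j, HasDerivAt (fun v => P v i j) (P' u i j) u)
    (hCderiv : ∀ u i j, HasDerivAt (fun v => C v i j) (C' u i j) u)
    (hidem : ∀ u, P u * P u = P u)
    (hPC : ∀ u, P u * C u = 0) (hCP : ∀ u, C u * P u = 0) (u : ℝ) (ε : ℝ) :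
    (P' u * exp ((-(ε : ℂ) ^ 2) • (C u * C u))).trace = 0 :=
  trace_proj_deriv_exp_eq_zero_general P P' C hPderiv hidem hPC hCP u ε
end

section
/- Let H be a complex Hilbert space, D : H → H a bounded self-adjoint operator, g : H → H a unitary operator, and λ > 0 a real number such that ‖D x‖ ≥ λ‖x‖ for all x ∈ H. For u ∈ [0, 1] set D_u = (1 − u)·D + u·g⁻¹∘D∘g. Then for every u ∈ [0, 1] and every x ∈ H: ‖D_u x‖ ≥ (λ − min(u, 1 − u)·‖D∘g − g∘D‖)·‖x‖. Moreover, if ‖D∘g − g∘D‖ < λ, then D_u is bijective for every u ∈ [0, 1]. -/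
/-!
With `C = D ∘ g - g ∘ D` one has `g⁻¹ D g - D = g⁻¹ C`, so
`D_u = D + u • g⁻¹ C = g⁻¹ D g - (1 - u) • g⁻¹ C`. Both `D` and `g⁻¹ D g` are bounded below by `λ`
and `g⁻¹` is isometric, so the reverse triangle inequality, applied to whichever of the two
expressions has the smaller coefficient, gives the lower bound. When `‖C‖ < λ` the bound is
positive; `D_u` is self-adjoint, so it is injective with closed range whose orthogonal
complement is `ker D_u = 0`, hence surjective.
-/

open ContinuousLinearMap

theorem sub_min_mul_norm_sub_le_norm_one_sub_smul_add_smul {F : Type*}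
    [SeminormedAddCommGroup F] [NormedSpace ℝ F] {a b : F} {r u : ℝ} (hu : u ∈ Set.Icc (0 : ℝ) 1)
    (ha : r ≤ ‖a‖) (hb : r ≤ ‖b‖) :
    r - min u (1 - u) * ‖b - a‖ ≤ ‖(1 - u) • a + u • b‖ := by
  obtain ⟨hu0, hu1⟩ := hu
  have from_a : ‖a‖ - u * ‖b - a‖ ≤ ‖(1 - u) • a + u • b‖ := by
    have h := norm_sub_norm_le a (-(u • (b - a)))
    rw [norm_neg, norm_smul, Real.norm_of_nonneg hu0] at h
    convert h using 2
    module
  have from_b : ‖b‖ - (1 - u) * ‖b - a‖ ≤ ‖(1 - u) • a + u • b‖ := by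
    have h := norm_sub_norm_le b ((1 - u) • (b - a))
    rw [norm_smul, Real.norm_of_nonneg (sub_nonneg.mpr hu1)] at h
    convert h using 2
    module
  rcases le_total u (1 - u) with h | h
  · rw [min_eq_left h]; linarith
  · rw [min_eq_right h]; linarith

theorem IsSelfAdjoint.bijective_of_le_norm {𝕜 H : Type*} [RCLike 𝕜] [NormedAddCommGroup H]
    [InnerProductSpace 𝕜 H] [CompleteSpace H] {T : H →L[𝕜] H} (hT : IsSelfAdjoint T) {c : ℝ}
    (hc : 0 < c) (h : ∀ x, c * ‖x‖ ≤ ‖T x‖) : Function.Bijective T := by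
  have hanti : AntilipschitzWith ⟨c⁻¹, (inv_pos.mpr hc).le⟩ T :=
    T.antilipschitz_of_bound fun x ↦ by
      change ‖x‖ ≤ c⁻¹ * ‖T x‖
      rw [inv_mul_eq_div, le_div_iff₀ hc, mul_comm]
      exact h x
  have hinj := hanti.injective
  have hclosed : IsClosed ((LinearMap.range (T : H →ₗ[𝕜] H) : Submodule 𝕜 H) : Set H) := by
    rw [LinearMap.coe_range]
    exact hanti.isClosed_range T.uniformContinuous
  have := hclosed.completeSpace_coe
  refine ⟨hinj, LinearMap.range_eq_top.mp (Submodule.orthogonal_eq_bot_iff.mp ?_)⟩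
  rw [T.orthogonal_range, hT.adjoint_eq, LinearMap.ker_eq_bot.mpr hinj]

section Unitary

variable {𝕜 H : Type*} [RCLike 𝕜] [NormedAddCommGroup H] [InnerProductSpace 𝕜 H] [CompleteSpace H]
  {g : H →L[𝕜] H}

theorem star_comp_comp_apply_sub_apply (hg : g ∈ unitary (H →L[𝕜] H)) (D : H →L[𝕜] H) (x : H) :
    (star g ∘L D ∘L g) x - D x = star g ((D ∘L g - g ∘L D) x) := by
  have hsg : star g (g (D x)) = D x := congr($(Unitary.star_mul_self_of_mem hg) (D x))
  simp [map_sub, hsg]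

theorem le_norm_star_comp_comp_apply (hg : g ∈ unitary (H →L[𝕜] H)) {D : H →L[𝕜] H} {lam : ℝ}
    (hD : ∀ x, lam * ‖x‖ ≤ ‖D x‖) (x : H) : lam * ‖x‖ ≤ ‖(star g ∘L D ∘L g) x‖ := by
  simpa [norm_map_of_mem_unitary (Unitary.star_mem hg), norm_map_of_mem_unitary hg] using hD (g x)

theorem le_norm_one_sub_smul_add_smul_star_comp_comp_apply [NormedSpace ℝ H]
    [IsScalarTower ℝ 𝕜 H] (hg : g ∈ unitary (H →L[𝕜] H)) {D : H →L[𝕜] H} {lam u : ℝ}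
    (hD : ∀ x, lam * ‖x‖ ≤ ‖D x‖) (hu : u ∈ Set.Icc (0 : ℝ) 1) (x : H) :
    (lam - min u (1 - u) * ‖D ∘L g - g ∘L D‖) * ‖x‖ ≤
      ‖((1 - u) • D + u • (star g ∘L D ∘L g)) x‖ := by
  have hmin : 0 ≤ min u (1 - u) := le_min hu.1 (sub_nonneg.mpr hu.2)
  have hdiff : ‖(star g ∘L D ∘L g) x - D x‖ ≤ ‖D ∘L g - g ∘L D‖ * ‖x‖ := by
    rw [star_comp_comp_apply_sub_apply hg, norm_map_of_mem_unitary (Unitary.star_mem hg)]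
    exact le_opNorm _ x
  calc (lam - min u (1 - u) * ‖D ∘L g - g ∘L D‖) * ‖x‖
      ≤ lam * ‖x‖ - min u (1 - u) * ‖(star g ∘L D ∘L g) x - D x‖ := by
        rw [sub_mul, mul_assoc]; gcongr
    _ ≤ ‖(1 - u) • D x + u • (star g ∘L D ∘L g) x‖ :=
        sub_min_mul_norm_sub_le_norm_one_sub_smul_add_smul hu (hD x)
          (le_norm_star_comp_comp_apply hg hD x)
    _ = ‖((1 - u) • D + u • (star g ∘L D ∘L g)) x‖ := rfl

end Unitary

theorem lower_bound_and_bijective_of_path_general {H : Type*} [NormedAddCommGroup H]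
    [InnerProductSpace ℂ H] [CompleteSpace H]
    (D g : H →L[ℂ] H) (hD : IsSelfAdjoint D) (hg : g ∈ unitary (H →L[ℂ] H))
    (lam : ℝ) (hDlow : ∀ x : H, lam * ‖x‖ ≤ ‖D x‖)
    (Du : ℝ → H →L[ℂ] H)
    (hDu : ∀ u : ℝ, Du u = (1 - u) • D + u • (star g ∘L D ∘L g)) :
    (∀ u ∈ Set.Icc (0 : ℝ) 1, ∀ x : H,
      (lam - min u (1 - u) * ‖D ∘L g - g ∘L D‖) * ‖x‖ ≤ ‖Du u x‖) ∧
    (‖D ∘L g - g ∘L D‖ < lam →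
      ∀ u ∈ Set.Icc (0 : ℝ) 1, Function.Bijective (Du u)) := by
  have hbound : ∀ u ∈ Set.Icc (0 : ℝ) 1, ∀ x : H,
      (lam - min u (1 - u) * ‖D ∘L g - g ∘L D‖) * ‖x‖ ≤ ‖Du u x‖ := fun u hu x ↦
    hDu u ▸ le_norm_one_sub_smul_add_smul_star_comp_comp_apply hg hDlow hu x
  refine ⟨hbound, fun hflat u hu ↦ ?_⟩
  have hselfAdjoint : IsSelfAdjoint (Du u) := hDu u ▸
    ((IsSelfAdjoint.all (1 - u)).smul hD).add ((IsSelfAdjoint.all u).smul (hD.conjugate' g))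
  have hpos : 0 < lam - min u (1 - u) * ‖D ∘L g - g ∘L D‖ := by
    have := mul_le_of_le_one_left (norm_nonneg (D ∘L g - g ∘L D))
      ((min_le_left u (1 - u)).trans hu.2)
    linarith
  exact hselfAdjoint.bijective_of_le_norm hpos (hbound u hu)

/-- Let `D` be a bounded self-adjoint operator on a complex Hilbert space `H`,
`g` a unitary operator and `λ > 0` with `‖D x‖ ≥ λ‖x‖` for all `x`.  Setting
`D_u = (1 − u)·D + u·g⁻¹∘D∘g` (with `g⁻¹ = g* = star g`), we have
`‖D_u x‖ ≥ (λ − min(u, 1 − u)·‖D∘g − g∘D‖)·‖x‖` for every `u ∈ [0,1]` and `x ∈ H`;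
moreover if `‖D∘g − g∘D‖ < λ` then `D_u` is bijective for every `u ∈ [0,1]`. -/
theorem lower_bound_and_bijective_of_path {H : Type*} [NormedAddCommGroup H]
    [InnerProductSpace ℂ H] [CompleteSpace H]
    (D g : H →L[ℂ] H) (hD : IsSelfAdjoint D) (hg : g ∈ unitary (H →L[ℂ] H))
    (lam : ℝ) (hlam : 0 < lam) (hDlow : ∀ x : H, lam * ‖x‖ ≤ ‖D x‖)
    (Du : ℝ → H →L[ℂ] H)
    (hDu : ∀ u : ℝ, Du u = (1 - u) • D + u • (star g ∘L D ∘L g)) :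
    (∀ u ∈ Set.Icc (0 : ℝ) 1, ∀ x : H,
      (lam - min u (1 - u) * ‖D ∘L g - g ∘L D‖) * ‖x‖ ≤ ‖Du u x‖) ∧
    (‖D ∘L g - g ∘L D‖ < lam →
      ∀ u ∈ Set.Icc (0 : ℝ) 1, Function.Bijective (Du u)) :=
  lower_bound_and_bijective_of_path_general D g hD hg lam hDlow Du hDu
end

section
/- Let A be a Banach algebra. Let a, b : (−∞, 0] → A be given by a(x) = a_c + e^x·a_∞(x) and b(x) = b_c + e^x·b_∞(x), where a_c, b_c ∈ A are constants and a_∞, b_∞ : (−∞, 0] → A are differentiable with a_∞, a_∞′, b_∞, b_∞′ bounded. For a function f : (−∞, 0] → A set ‖f‖₁ = sup_{x ≤ 0} ‖f(x)‖ + sup_{x ≤ 0} ‖f′(x)‖, and define the b-norm ᵇ‖a‖ = ‖a‖₁ + 2‖a_∞‖₁. Then the pointwise product satisfies (a·b)(x) = a_c·b_c + e^x·(ab)_∞(x) with (ab)_∞(x) = a_c·b_∞(x) + a_∞(x)·b_c + e^x·a_∞(x)·b_∞(x), and ᵇ‖a·b‖ ≤ ᵇ‖a‖ · ᵇ‖b‖,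 i.e. ‖a·b‖₁ + 2‖(ab)_∞‖₁ ≤ (‖a‖₁ + 2‖a_∞‖₁)·(‖b‖₁ + 2‖b_∞‖₁). -/
/-! The C¹-norm is submultiplicative by the Leibniz rule, and since `e^x ≤ 1` on `(−∞, 0]`,
multiplying by `e^x` at most doubles it (`‖e^x‖₁ = 2`). The constant `a_c` is the limit of `a`
at `−∞`, so `‖a_c‖ ≤ ‖a‖₁`. Expanding `(ab)_∞` then gives
`‖(ab)_∞‖₁ ≤ ‖a‖₁‖b_∞‖₁ + ‖a_∞‖₁‖b‖₁ + 2‖a_∞‖₁‖b_∞‖₁`, matching the cross terms of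
`(‖a‖₁ + 2‖a_∞‖₁)(‖b‖₁ + 2‖b_∞‖₁)`. -/

open Set Filter

/-- The C¹-norm of a function on `(−∞, 0]` with values in a Banach algebra,
given together with its derivative function:
`‖f‖₁ = sup_{x ≤ 0} ‖f(x)‖ + sup_{x ≤ 0} ‖f′(x)‖`. -/
noncomputable def C1NormIic {A : Type*} [NormedRing A] (f f' : ℝ → A) : ℝ :=
  (⨆ x : Iic (0 : ℝ), ‖f x‖) + ⨆ x : Iic (0 : ℝ), ‖f' x‖

theorem add_smul_mul_add_smul {R A : Type*} [CommRing R] [Ring A] [Algebra R A]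
    (t : R) (c d f g : A) :
    (c + t • f) * (d + t • g) = c * d + t • (c * g + f * d + t • (f * g)) := by
  simp only [mul_add, add_mul, smul_add, smul_smul, mul_smul_comm, smul_mul_assoc]
  abel

theorem norm_exp_smul_le_of_nonpos {E : Type*} [SeminormedAddCommGroup E] [NormedSpace ℝ E]
    {x : ℝ} (hx : x ≤ 0) (v : E) : ‖Real.exp x • v‖ ≤ ‖v‖ := by
  rw [norm_smul, Real.norm_of_nonneg (Real.exp_pos x).le]
  exact mul_le_of_le_one_left (norm_nonneg v) (Real.exp_le_one_iff.mpr hx)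

section SupNormIic

variable {E : Type*} [SeminormedAddCommGroup E] {f : ℝ → E}

theorem norm_le_iSup_norm_Iic (hf : BddAbove (range fun x : Iic (0 : ℝ) => ‖f x‖))
    {x : ℝ} (hx : x ≤ 0) : ‖f x‖ ≤ ⨆ x : Iic (0 : ℝ), ‖f x‖ :=
  le_ciSup hf ⟨x, hx⟩

theorem iSup_norm_Iic_le {C : ℝ} (h : ∀ x ≤ 0, ‖f x‖ ≤ C) :
    (⨆ x : Iic (0 : ℝ), ‖f x‖) ≤ C :=
  ciSup_le fun x => h x x.2

theorem iSup_norm_Iic_nonneg : 0 ≤ ⨆ x : Iic (0 : ℝ), ‖f x‖ :=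
  Real.iSup_nonneg fun _ => norm_nonneg _

theorem bddAbove_norm_Iic_of_le {C : ℝ} (h : ∀ x ≤ 0, ‖f x‖ ≤ C) :
    BddAbove (range fun x : Iic (0 : ℝ) => ‖f x‖) :=
  ⟨C, by rintro _ ⟨x, rfl⟩; exact h x x.2⟩

theorem norm_le_iSup_norm_Iic_of_tendsto {c : E}
    (hf : BddAbove (range fun x : Iic (0 : ℝ) => ‖f x‖)) (hc : Tendsto f atBot (nhds c)) :
    ‖c‖ ≤ ⨆ x : Iic (0 : ℝ), ‖f x‖ :=
  le_of_tendsto hc.norm <| (eventually_le_atBot 0).mono fun _ hx => norm_le_iSup_norm_Iic hf hx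

variable [NormedSpace ℝ E]

theorem tendsto_add_exp_smul_atBot (c : E)
    (hf : BddAbove (range fun x : Iic (0 : ℝ) => ‖f x‖)) :
    Tendsto (fun x => c + Real.exp x • f x) atBot (nhds c) := by
  have hbdd : IsBoundedUnder (· ≤ ·) atBot (norm ∘ f) :=
    isBoundedUnder_of_eventually_le <|
      (eventually_le_atBot 0).mono fun _ hx => norm_le_iSup_norm_Iic hf hx
  simpa using (Real.tendsto_exp_atBot.zero_smul_isBoundedUnder_le hbdd).const_add c

theorem bddAbove_norm_Iic_add_exp_smul (c : E)
    (hf : BddAbove (range fun x : Iic (0 : ℝ) => ‖f x‖)) :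
    BddAbove (range fun x : Iic (0 : ℝ) => ‖c + Real.exp x • f x‖) :=
  bddAbove_norm_Iic_of_le fun _ hx =>
    norm_add_le_of_le le_rfl
      ((norm_exp_smul_le_of_nonpos hx _).trans (norm_le_iSup_norm_Iic hf hx))

theorem bddAbove_norm_Iic_exp_smul_add_exp_smul {f' : ℝ → E}
    (hf : BddAbove (range fun x : Iic (0 : ℝ) => ‖f x‖))
    (hf' : BddAbove (range fun x : Iic (0 : ℝ) => ‖f' x‖)) :
    BddAbove (range fun x : Iic (0 : ℝ) => ‖Real.exp x • f x + Real.exp x • f' x‖) :=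
  bddAbove_norm_Iic_of_le fun _ hx =>
    norm_add_le_of_le
      ((norm_exp_smul_le_of_nonpos hx _).trans (norm_le_iSup_norm_Iic hf hx))
      ((norm_exp_smul_le_of_nonpos hx _).trans (norm_le_iSup_norm_Iic hf' hx))

end SupNormIic

section C1NormIic

variable {A : Type*} [NormedRing A] {f f' g g' : ℝ → A}

theorem C1NormIic_nonneg : 0 ≤ C1NormIic f f' :=
  add_nonneg iSup_norm_Iic_nonneg iSup_norm_Iic_nonneg

theorem C1NormIic_le_of_forall_le {C₀ C₁ : ℝ} (h₀ : ∀ x ≤ 0, ‖f x‖ ≤ C₀)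
    (h₁ : ∀ x ≤ 0, ‖f' x‖ ≤ C₁) : C1NormIic f f' ≤ C₀ + C₁ :=
  add_le_add (iSup_norm_Iic_le h₀) (iSup_norm_Iic_le h₁)

theorem norm_le_C1NormIic_of_tendsto {c : A}
    (hf : BddAbove (range fun x : Iic (0 : ℝ) => ‖f x‖)) (hc : Tendsto f atBot (nhds c)) :
    ‖c‖ ≤ C1NormIic f f' :=
  (norm_le_iSup_norm_Iic_of_tendsto hf hc).trans (le_add_of_nonneg_right iSup_norm_Iic_nonneg)

theorem C1NormIic_mul_le (hf : BddAbove (range fun x : Iic (0 : ℝ) => ‖f x‖))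
    (hf' : BddAbove (range fun x : Iic (0 : ℝ) => ‖f' x‖))
    (hg : BddAbove (range fun x : Iic (0 : ℝ) => ‖g x‖))
    (hg' : BddAbove (range fun x : Iic (0 : ℝ) => ‖g' x‖)) :
    C1NormIic (fun x => f x * g x) (fun x => f' x * g x + f x * g' x) ≤
      C1NormIic f f' * C1NormIic g g' := by
  set F₀ := ⨆ x : Iic (0 : ℝ), ‖f x‖
  set F₁ := ⨆ x : Iic (0 : ℝ), ‖f' x‖
  set G₀ := ⨆ x : Iic (0 : ℝ), ‖g x‖
  set G₁ := ⨆ x : Iic (0 : ℝ), ‖g' x‖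
  have hF₀ : 0 ≤ F₀ := iSup_norm_Iic_nonneg
  have hF₁ : 0 ≤ F₁ := iSup_norm_Iic_nonneg
  have hG₁ : 0 ≤ G₁ := iSup_norm_Iic_nonneg
  calc C1NormIic (fun x => f x * g x) (fun x => f' x * g x + f x * g' x)
      ≤ F₀ * G₀ + (F₁ * G₀ + F₀ * G₁) :=
        C1NormIic_le_of_forall_le
          (fun _ hx => norm_mul_le_of_le (norm_le_iSup_norm_Iic hf hx)
            (norm_le_iSup_norm_Iic hg hx))
          (fun _ hx => norm_add_le_of_le
            (norm_mul_le_of_le (norm_le_iSup_norm_Iic hf' hx) (norm_le_iSup_norm_Iic hg hx))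
            (norm_mul_le_of_le (norm_le_iSup_norm_Iic hf hx) (norm_le_iSup_norm_Iic hg' hx)))
    _ ≤ (F₀ + F₁) * (G₀ + G₁) := by nlinarith [mul_nonneg hF₁ hG₁]

variable [NormedAlgebra ℝ A]

theorem C1NormIic_mul_decayPart_le (c d : A)
    (hf : BddAbove (range fun x : Iic (0 : ℝ) => ‖f x‖))
    (hf' : BddAbove (range fun x : Iic (0 : ℝ) => ‖f' x‖))
    (hg : BddAbove (range fun x : Iic (0 : ℝ) => ‖g x‖))
    (hg' : BddAbove (range fun x : Iic (0 : ℝ) => ‖g' x‖)) :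
    C1NormIic (fun x => c * g x + f x * d + Real.exp x • (f x * g x))
        (fun x => c * g' x + f' x * d + Real.exp x • (f x * g x)
          + Real.exp x • (f' x * g x + f x * g' x)) ≤
      ‖c‖ * C1NormIic g g' + C1NormIic f f' * ‖d‖ + 2 * (C1NormIic f f' * C1NormIic g g') := by
  set F₀ := ⨆ x : Iic (0 : ℝ), ‖f x‖
  set F₁ := ⨆ x : Iic (0 : ℝ), ‖f' x‖
  set G₀ := ⨆ x : Iic (0 : ℝ), ‖g x‖
  set G₁ := ⨆ x : Iic (0 : ℝ), ‖g' x‖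
  have hF₀ : 0 ≤ F₀ := iSup_norm_Iic_nonneg
  have hF₁ : 0 ≤ F₁ := iSup_norm_Iic_nonneg
  have hG₀ : 0 ≤ G₀ := iSup_norm_Iic_nonneg
  have hG₁ : 0 ≤ G₁ := iSup_norm_Iic_nonneg
  have hfg : ∀ x ≤ (0 : ℝ), ‖Real.exp x • (f x * g x)‖ ≤ F₀ * G₀ := fun _ hx =>
    (norm_exp_smul_le_of_nonpos hx _).trans
      (norm_mul_le_of_le (norm_le_iSup_norm_Iic hf hx) (norm_le_iSup_norm_Iic hg hx))
  have hfg' : ∀ x ≤ (0 : ℝ), ‖Real.exp x • (f' x * g x + f x * g' x)‖ ≤ F₁ * G₀ + F₀ * G₁ :=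
    fun _ hx => (norm_exp_smul_le_of_nonpos hx _).trans <| norm_add_le_of_le
      (norm_mul_le_of_le (norm_le_iSup_norm_Iic hf' hx) (norm_le_iSup_norm_Iic hg hx))
      (norm_mul_le_of_le (norm_le_iSup_norm_Iic hf hx) (norm_le_iSup_norm_Iic hg' hx))
  calc _ ≤ (‖c‖ * G₀ + F₀ * ‖d‖ + F₀ * G₀)
          + (‖c‖ * G₁ + F₁ * ‖d‖ + F₀ * G₀ + (F₁ * G₀ + F₀ * G₁)) :=
        C1NormIic_le_of_forall_le
          (fun x hx => norm_add₃_le.trans <| add_le_add_three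
            (norm_mul_le_of_le le_rfl (norm_le_iSup_norm_Iic hg hx))
            (norm_mul_le_of_le (norm_le_iSup_norm_Iic hf hx) le_rfl) (hfg x hx))
          (fun x hx => (norm_add_le _ _).trans <| add_le_add
            (norm_add₃_le.trans <| add_le_add_three
              (norm_mul_le_of_le le_rfl (norm_le_iSup_norm_Iic hg' hx))
              (norm_mul_le_of_le (norm_le_iSup_norm_Iic hf' hx) le_rfl) (hfg x hx))
            (hfg' x hx))
    _ ≤ ‖c‖ * (G₀ + G₁) + (F₀ + F₁) * ‖d‖ + 2 * ((F₀ + F₁) * (G₀ + G₁)) := by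
        nlinarith [mul_nonneg hF₀ hG₁, mul_nonneg hF₁ hG₀, mul_nonneg hF₁ hG₁]

end C1NormIic

theorem bNorm_multiplicative_general {A : Type*} [NormedRing A] [NormedAlgebra ℝ A]
    (ac bc : A) (ainf ainf' binf binf' : ℝ → A)
    (hb1 : BddAbove (range fun x : Iic (0 : ℝ) => ‖ainf x‖))
    (hb2 : BddAbove (range fun x : Iic (0 : ℝ) => ‖ainf' x‖))
    (hb3 : BddAbove (range fun x : Iic (0 : ℝ) => ‖binf x‖))
    (hb4 : BddAbove (range fun x : Iic (0 : ℝ) => ‖binf' x‖))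
    (a b a' b' abinf abinf' ab' : ℝ → A)
    (ha : a = fun x => ac + Real.exp x • ainf x)
    (hb : b = fun x => bc + Real.exp x • binf x)
    (ha' : a' = fun x => Real.exp x • ainf x + Real.exp x • ainf' x)
    (hb' : b' = fun x => Real.exp x • binf x + Real.exp x • binf' x)
    (habinf : abinf = fun x =>
      ac * binf x + ainf x * bc + Real.exp x • (ainf x * binf x))
    (habinf' : abinf' = fun x =>
      ac * binf' x + ainf' x * bc + Real.exp x • (ainf x * binf x)
        + Real.exp x • (ainf' x * binf x + ainf x * binf' x))
    (hab' : ab' = fun x => a' x * b x + a x * b' x) :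
    (∀ x : ℝ, a x * b x = ac * bc + Real.exp x • abinf x) ∧
    C1NormIic (fun x => a x * b x) ab' + 2 * C1NormIic abinf abinf' ≤
      (C1NormIic a a' + 2 * C1NormIic ainf ainf') *
        (C1NormIic b b' + 2 * C1NormIic binf binf') := by
  subst habinf habinf' hab'
  refine ⟨fun x => by rw [ha, hb]; exact add_smul_mul_add_smul _ _ _ _ _, ?_⟩
  have ha₀ : BddAbove (range fun x : Iic (0 : ℝ) => ‖a x‖) :=
    ha ▸ bddAbove_norm_Iic_add_exp_smul ac hb1
  have hb₀ : BddAbove (range fun x : Iic (0 : ℝ) => ‖b x‖) :=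
    hb ▸ bddAbove_norm_Iic_add_exp_smul bc hb3
  have ha₁ : BddAbove (range fun x : Iic (0 : ℝ) => ‖a' x‖) :=
    ha' ▸ bddAbove_norm_Iic_exp_smul_add_exp_smul hb1 hb2
  have hb₁ : BddAbove (range fun x : Iic (0 : ℝ) => ‖b' x‖) :=
    hb' ▸ bddAbove_norm_Iic_exp_smul_add_exp_smul hb3 hb4
  have hac : ‖ac‖ ≤ C1NormIic a a' :=
    norm_le_C1NormIic_of_tendsto ha₀ (ha ▸ tendsto_add_exp_smul_atBot ac hb1)
  have hbc : ‖bc‖ ≤ C1NormIic b b' :=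
    norm_le_C1NormIic_of_tendsto hb₀ (hb ▸ tendsto_add_exp_smul_atBot bc hb3)
  have hainf : 0 ≤ C1NormIic ainf ainf' := C1NormIic_nonneg
  have hbinf : 0 ≤ C1NormIic binf binf' := C1NormIic_nonneg
  calc _ ≤ C1NormIic a a' * C1NormIic b b' + 2 * (‖ac‖ * C1NormIic binf binf'
          + C1NormIic ainf ainf' * ‖bc‖ + 2 * (C1NormIic ainf ainf' * C1NormIic binf binf')) :=
        add_le_add (C1NormIic_mul_le ha₀ ha₁ hb₀ hb₁) <|
          mul_le_mul_of_nonneg_left (C1NormIic_mul_decayPart_le ac bc hb1 hb2 hb3 hb4) zero_le_two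
    _ ≤ C1NormIic a a' * C1NormIic b b' + 2 * (C1NormIic a a' * C1NormIic binf binf'
          + C1NormIic ainf ainf' * C1NormIic b b'
          + 2 * (C1NormIic ainf ainf' * C1NormIic binf binf')) := by gcongr
    _ = _ := by ring

/-- Multiplicativity of the b-norm `ᵇ‖a‖ = ‖a‖₁ + 2‖a_∞‖₁` on functions
`a(x) = a_c + e^x·a_∞(x)` on the cylindrical end `(−∞, 0]` with values in a Banach
algebra `A`: the pointwise product satisfies
`(a·b)(x) = a_c·b_c + e^x·(ab)_∞(x)` with
`(ab)_∞ = a_c·b_∞ + a_∞·b_c + e^x·a_∞·b_∞`, and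
`‖a·b‖₁ + 2‖(ab)_∞‖₁ ≤ (‖a‖₁ + 2‖a_∞‖₁)·(‖b‖₁ + 2‖b_∞‖₁)`. -/
theorem bNorm_multiplicative {A : Type*} [NormedRing A] [NormedAlgebra ℝ A]
    [CompleteSpace A]
    (ac bc : A) (ainf ainf' binf binf' : ℝ → A)
    (hainf : ∀ x ≤ (0 : ℝ), HasDerivWithinAt ainf (ainf' x) (Iic 0) x)
    (hbinf : ∀ x ≤ (0 : ℝ), HasDerivWithinAt binf (binf' x) (Iic 0) x)
    (hb1 : BddAbove (range fun x : Iic (0 : ℝ) => ‖ainf x‖))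
    (hb2 : BddAbove (range fun x : Iic (0 : ℝ) => ‖ainf' x‖))
    (hb3 : BddAbove (range fun x : Iic (0 : ℝ) => ‖binf x‖))
    (hb4 : BddAbove (range fun x : Iic (0 : ℝ) => ‖binf' x‖))
    (a b a' b' abinf abinf' ab' : ℝ → A)
    (ha : a = fun x => ac + Real.exp x • ainf x)
    (hb : b = fun x => bc + Real.exp x • binf x)
    (ha' : a' = fun x => Real.exp x • ainf x + Real.exp x • ainf' x)
    (hb' : b' = fun x => Real.exp x • binf x + Real.exp x • binf' x)
    (habinf : abinf = fun x =>
      ac * binf x + ainf x * bc + Real.exp x • (ainf x * binf x))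
    (habinf' : abinf' = fun x =>
      ac * binf' x + ainf' x * bc + Real.exp x • (ainf x * binf x)
        + Real.exp x • (ainf' x * binf x + ainf x * binf' x))
    (hab' : ab' = fun x => a' x * b x + a x * b' x) :
    (∀ x : ℝ, a x * b x = ac * bc + Real.exp x • abinf x) ∧
    C1NormIic (fun x => a x * b x) ab' + 2 * C1NormIic abinf abinf' ≤
      (C1NormIic a a' + 2 * C1NormIic ainf ainf') *
        (C1NormIic b b' + 2 * C1NormIic binf binf') :=
  bNorm_multiplicative_general ac bc ainf ainf' binf binf' hb1 hb2 hb3 hb4 a b a' b' abinf abinf'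
    ab' ha hb ha' hb' habinf habinf' hab'
end
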